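/- arXiv:2210.11867 — 3 statements merged into one kernel-verified Lean document; each statement's English description precedes it below -/
import Mathlib

section
/- Let S ∈ ℝ^{d×d} with S² = I, let Λ be a set with an involution R : Λ → Λ, and let a : ℝ^d → ℝ^d, b : ℝ^d → ℝ^{d×d}, v : Λ → ℝ^d. Assume b is continuous, b(x) is invertible for x in a dense subset of ℝ^d, and the image of v is not contained in a proper affine subspace of ℝ^d. Then the condition a(Sx) + b(Sx)v(Ry) = -S(a(x) + b(x)v(y)) for all x, y (together with a(Sx) = -S a(x)) holds if and only if there exists A ∈ ℝ^{d×d} with A² = I such that a(Sx) = -S a(x), b(Sx) = -S b(x) A, and v(Ry) = A v(y) for all x ∈ ℝ^d and y ∈ Λ. -/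
/-- If `M *ᵥ w = N *ᵥ w` for all `w`, then `M = N`. -/
lemma matrix_ext_of_mulVec {d : ℕ} {M N : Matrix (Fin d) (Fin d) ℝ}
    (h : ∀ w, M.mulVec w = N.mulVec w) : M = N := by
  ext i j
  have := congrFun (h (Pi.single j 1)) i
  simpa using this

/-- Two matrices agreeing on a family affinely spanning everything are equal. -/
lemma matrix_ext_of_affineSpan {d : ℕ} {Λ : Type*} {v : Λ → (Fin d → ℝ)}
    (hspan : affineSpan ℝ (Set.range v) = ⊤)
    {M N : Matrix (Fin d) (Fin d) ℝ}
    (h : ∀ y, M.mulVec (v y) = N.mulVec (v y)) : M = N := by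
  have hsp : Submodule.span ℝ (Set.range v) = ⊤ := by
    rw [eq_top_iff]
    intro w _
    have hw : w ∈ affineSpan ℝ (Set.range v) := by rw [hspan]; trivial
    exact affineSpan_le_toAffineSubspace_span hw
  have hext : M.mulVecLin = N.mulVecLin := by
    apply LinearMap.ext_on hsp
    rintro _ ⟨y, rfl⟩
    simpa using h y
  exact matrix_ext_of_mulVec fun w => LinearMap.congr_fun hext w

/-- Lemma 3.2: under density of invertibility of `b` and the affine spanning
condition on `v`, the time-reversibility condition on the slow equation holds
iff there is an involution `A` with `a(Sx) = -Sa(x)`, `b(Sx) = -Sb(x)A` and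
`v(Ry) = Av(y)`. -/
theorem time_reversibility_characterization
    {d : ℕ} {Λ : Type*}
    (S : Matrix (Fin d) (Fin d) ℝ) (hS : S * S = 1)
    (R : Λ → Λ) (hR : ∀ y, R (R y) = y)
    (a : (Fin d → ℝ) → (Fin d → ℝ))
    (b : (Fin d → ℝ) → Matrix (Fin d) (Fin d) ℝ)
    (v : Λ → (Fin d → ℝ))
    (hb_cont : Continuous b)
    (hb_dense : Dense {x : Fin d → ℝ | IsUnit (b x).det})
    (hspan : affineSpan ℝ (Set.range v) = ⊤) :
    ((∀ (x : Fin d → ℝ) (y : Λ),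
        a (S.mulVec x) + (b (S.mulVec x)).mulVec (v (R y)) =
          -(S.mulVec (a x + (b x).mulVec (v y)))) ∧
      (∀ x : Fin d → ℝ, a (S.mulVec x) = -(S.mulVec (a x)))) ↔
    (∃ A : Matrix (Fin d) (Fin d) ℝ, A * A = 1 ∧
      (∀ x : Fin d → ℝ, a (S.mulVec x) = -(S.mulVec (a x))) ∧
      (∀ x : Fin d → ℝ, b (S.mulVec x) = -(S * b x * A)) ∧
      (∀ y : Λ, v (R y) = A.mulVec (v y))) := by
  constructor
  · rintro ⟨h1, h2⟩
    -- key identity: b(Sx) v(Ry) = -S b(x) v(y)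
    have key : ∀ (x : Fin d → ℝ) (y : Λ),
        (b (S.mulVec x)).mulVec (v (R y)) = -(S.mulVec ((b x).mulVec (v y))) := by
      intro x y
      have := h1 x y
      rw [h2 x] at this
      have h3 : S.mulVec (a x + (b x).mulVec (v y)) =
          S.mulVec (a x) + S.mulVec ((b x).mulVec (v y)) := by
        simp [Matrix.mulVec_add]
      rw [h3, neg_add] at this
      exact add_left_cancel this
    -- pick x₀ with b x₀ invertible
    obtain ⟨x₀, hx₀⟩ := hb_dense.nonempty
    have hx₀ : IsUnit (b x₀).det := hx₀
    set A : Matrix (Fin d) (Fin d) ℝ := -((b x₀)⁻¹ * S * b (S.mulVec x₀)) with hA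
    have hinv : (b x₀)⁻¹ * (b x₀) = 1 := Matrix.nonsing_inv_mul _ hx₀
    -- v (R y) = A v y
    have hv : ∀ y, v (R y) = A.mulVec (v y) := by
      intro y
      have hk := key (S.mulVec x₀) y
      rw [Matrix.mulVec_mulVec, hS, Matrix.one_mulVec] at hk
      have := congrArg (fun w => (b x₀)⁻¹.mulVec w) hk
      simp only [Matrix.mulVec_mulVec, hinv, Matrix.one_mulVec, Matrix.mulVec_neg] at this
      rw [this, hA]
      simp [Matrix.neg_mulVec, Matrix.mulVec_mulVec, Matrix.mul_assoc]
    -- A is an involution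
    have hAA : A * A = 1 := by
      apply matrix_ext_of_mulVec
      intro w
      rw [Matrix.one_mulVec]
      have hAv : ∀ y, (A * A).mulVec (v y) = (1 : Matrix (Fin d) (Fin d) ℝ).mulVec (v y) := by
        intro y
        rw [← Matrix.mulVec_mulVec, ← hv y, ← hv (R y), hR, Matrix.one_mulVec]
      have := matrix_ext_of_affineSpan hspan hAv
      rw [this, Matrix.one_mulVec]
    -- b (S x) = -(S * b x * A)
    have hb : ∀ x, b (S.mulVec x) = -(S * b x * A) := by
      intro x
      have hbv : ∀ y, (b (S.mulVec x) * A).mulVec (v y) = (-(S * b x)).mulVec (v y) := by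
        intro y
        rw [← Matrix.mulVec_mulVec, ← hv y, key x y, Matrix.neg_mulVec, Matrix.mulVec_mulVec]
      have h4 := matrix_ext_of_affineSpan hspan hbv
      calc b (S.mulVec x) = b (S.mulVec x) * (A * A) := by rw [hAA, Matrix.mul_one]
        _ = (b (S.mulVec x) * A) * A := by rw [Matrix.mul_assoc]
        _ = -(S * b x) * A := by rw [h4]
        _ = -(S * b x * A) := by rw [Matrix.neg_mul]
    exact ⟨A, hAA, h2, hb, hv⟩
  · rintro ⟨A, hAA, ha, hb, hv⟩
    refine ⟨fun x y => ?_, ha⟩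
    rw [ha, hb, hv, Matrix.neg_mulVec, Matrix.mulVec_mulVec, Matrix.mul_assoc (S * b x) A A,
      hAA, Matrix.mul_one, Matrix.mulVec_add, neg_add, ← Matrix.mulVec_mulVec]
end

section
/- Let m ≤ n, let E₀ ∈ ℝ^{m×n} have rank m, and let E ∈ ℝ^{m×n} be sufficiently close to E₀ (in any fixed norm). Then there exist matrices P ∈ ℝ^{m×m} and Q ∈ ℝ^{n×n}, each close to the identity, such that P E₀ Qᵀ = E. -/
open Matrix

/-- Proposition 5.2: local surjectivity of `(P,Q) ↦ P E₀ Qᵀ` near a full-rank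
matrix `E₀`: for every neighborhood `U` of `(I,I)` there is a neighborhood `V`
of `E₀` such that every `E ∈ V` equals `P E₀ Qᵀ` for some `(P,Q) ∈ U`. -/
theorem local_surjectivity_near_full_rank
    {m n : ℕ} (hmn : m ≤ n) (E₀ : Matrix (Fin m) (Fin n) ℝ) (hrank : E₀.rank = m) :
    ∀ U ∈ nhds ((1, 1) : Matrix (Fin m) (Fin m) ℝ × Matrix (Fin n) (Fin n) ℝ),
      ∃ V ∈ nhds E₀, ∀ E ∈ V, ∃ PQ ∈ U,
        PQ.1 * E₀ * PQ.2ᵀ = E := by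
  intro U hU
  set A : Matrix (Fin m) (Fin m) ℝ := E₀ * E₀ᵀ with hA
  have hArank : A.rank = m := by
    rw [hA, rank_self_mul_transpose, hrank]
  have hAunit : IsUnit A := by
    rw [← mulVec_surjective_iff_isUnit]
    have ht : LinearMap.range A.mulVecLin = ⊤ := by
      apply Submodule.eq_top_of_finrank_eq
      rw [← Matrix.rank, hArank]
      simp [Module.finrank_fintype_fun_eq_card]
    intro v
    exact (LinearMap.range_eq_top.mp ht) v
  have hAA : A * A⁻¹ = 1 := mul_nonsing_inv A (isUnit_iff_isUnit_det A |>.mp hAunit)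
  set G : Matrix (Fin n) (Fin m) ℝ := E₀ᵀ * A⁻¹ with hG
  set f : Matrix (Fin m) (Fin n) ℝ →
      Matrix (Fin m) (Fin m) ℝ × Matrix (Fin n) (Fin n) ℝ :=
    fun E => (1, (1 + G * (E - E₀))ᵀ) with hf
  have hcont : Continuous f := by
    apply Continuous.prodMk continuous_const
    apply Continuous.matrix_transpose
    exact continuous_const.add ((continuous_const.matrix_mul
      (continuous_id.sub continuous_const)))
  have hf0 : f E₀ = (1, 1) := by
    simp [hf]
  refine ⟨f ⁻¹' U, hcont.continuousAt.preimage_mem_nhds (hf0 ▸ hU), ?_⟩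
  intro E hE
  refine ⟨f E, hE, ?_⟩
  show (1 : Matrix (Fin m) (Fin m) ℝ) * E₀ * ((1 + G * (E - E₀))ᵀ)ᵀ = E
  rw [transpose_transpose, Matrix.one_mul, Matrix.mul_add, Matrix.mul_one, hG, ← Matrix.mul_assoc,
    ← Matrix.mul_assoc, ← hA, hAA, Matrix.one_mul]

  abel
end

section
/- Let S = diag(S₁,...,S_d) with S_β ∈ {±1}, fix i with S_i = 1 and j with S_j = -1, let 1 ≤ d⁺ < d, and define b : ℝ^d → ℝ^{d×d} by b^{id}(X) = b^{j1}(X) = X^i and all other entries zero. Let E ∈ ℝ^{d×d} be skew-symmetric with E^{γβ} = 0 whenever β,γ ≤ d⁺ or β,γ > d⁺. Then the drift correction (1/2) Σ_{α,β,γ=1}^d E^{γβ} ∂_α b^β(X) b^{αγ}(X) equals (1/2) E^{d1} X^i e_j, where e_j is the j-th standard basis vector and b^β denotes the β-th column of b. In particular, the correction is nonzero whenever E^{d1} ≠ 0 and X^i ≠ 0. -/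
open Matrix

/-- Section 6 computation: for the particular choice of `b` with
`b^{id}(X) = b^{j1}(X) = X^i` and all other entries zero, the Lévy area drift
correction `(1/2)Σ E^{γβ} ∂_α b^β b^{αγ}` equals `(1/2) E^{d1} X^i e_j`;
in particular it is nonzero when `E^{d1} ≠ 0` and `X^i ≠ 0`. -/
theorem drift_correction_nonzero
    {d dp : ℕ} (h1 : 1 ≤ dp) (h2 : dp < d)
    (S : Fin d → ℝ) (hSpm : ∀ β, S β = 1 ∨ S β = -1)
    (i j : Fin d) (hSi : S i = 1) (hSj : S j = -1)
    (E : Matrix (Fin d) (Fin d) ℝ) (hskew : Eᵀ = -E)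
    (hblock : ∀ β γ : Fin d,
      (((β : ℕ) < dp ∧ (γ : ℕ) < dp) ∨ (dp ≤ (β : ℕ) ∧ dp ≤ (γ : ℕ))) → E γ β = 0)
    (b : (Fin d → ℝ) → Matrix (Fin d) (Fin d) ℝ)
    (hb : ∀ (X : Fin d → ℝ) (β γ : Fin d),
      b X β γ = if β = i ∧ (γ : ℕ) = d - 1 then X i
        else if β = j ∧ (γ : ℕ) = 0 then X i else 0) :
    ∀ (X : Fin d → ℝ),
      (∀ ρ : Fin d,
        (1 / 2 : ℝ) * ∑ α : Fin d, ∑ β : Fin d, ∑ γ : Fin d,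
            E γ β * fderiv ℝ (fun Y => b Y ρ β) X (Pi.single α 1) * b X α γ =
          (1 / 2 : ℝ) * E (⟨d - 1, by omega⟩ : Fin d) (⟨0, by omega⟩ : Fin d) * X i *
            (if ρ = j then 1 else 0)) ∧
      (E (⟨d - 1, by omega⟩ : Fin d) (⟨0, by omega⟩ : Fin d) ≠ 0 → X i ≠ 0 →
        ∃ ρ : Fin d,
          (1 / 2 : ℝ) * ∑ α : Fin d, ∑ β : Fin d, ∑ γ : Fin d,
              E γ β * fderiv ℝ (fun Y => b Y ρ β) X (Pi.single α 1) * b X α γ ≠ 0) := by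
  have hij : i ≠ j := by
    intro h; rw [h, hSj] at hSi; norm_num at hSi
  intro X
  set L : Fin d := ⟨d - 1, by omega⟩ with hL
  set Z : Fin d := ⟨0, by omega⟩ with hZ
  have hbeq : ∀ (Y : Fin d → ℝ) (β γ : Fin d),
      b Y β γ = if β = i ∧ γ = L then Y i else if β = j ∧ γ = Z then Y i else 0 := by
    intro Y β γ
    rw [hb]
    have e1 : ((γ : ℕ) = d - 1) ↔ γ = L := by simp [hL, Fin.ext_iff]
    have e2 : ((γ : ℕ) = 0) ↔ γ = Z := by simp [hZ, Fin.ext_iff]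
    simp only [e1, e2]
  have hd : ∀ (ρ β α : Fin d),
      fderiv ℝ (fun Y => b Y ρ β) X (Pi.single α 1)
        = if (ρ = i ∧ β = L) ∨ (ρ = j ∧ β = Z) then (if α = i then (1:ℝ) else 0) else 0 := by
    intro ρ β α
    by_cases h : (ρ = i ∧ β = L) ∨ (ρ = j ∧ β = Z)
    · have hfun : (fun Y : Fin d → ℝ => b Y ρ β) = fun Y => Y i := by
        funext Y
        rw [hbeq]
        rcases h with ⟨h1, h2⟩ | ⟨h1, h2⟩
        · simp [h1, h2]
        · subst h1; subst h2
          simp [hij.symm]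
      rw [hfun, if_pos h]
      have : (fun Y : Fin d → ℝ => Y i)
          = ⇑(ContinuousLinearMap.proj (R := ℝ) (φ := fun _ : Fin d => ℝ) i) := rfl
      rw [this, ContinuousLinearMap.fderiv]
      simp [ContinuousLinearMap.proj_apply, Pi.single_apply, eq_comm]
    · have hfun : (fun Y : Fin d → ℝ => b Y ρ β) = fun _ => (0:ℝ) := by
        funext Y
        rw [hbeq]
        rcases not_or.mp h with ⟨h1, h2⟩
        rw [if_neg h1, if_neg h2]
      rw [hfun, if_neg h, fderiv_fun_const]
      simp
  have key : ∀ ρ : Fin d,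
      (∑ α : Fin d, ∑ β : Fin d, ∑ γ : Fin d,
          E γ β * fderiv ℝ (fun Y => b Y ρ β) X (Pi.single α 1) * b X α γ)
        = (if ρ = i then E L L * X i else if ρ = j then E L Z * X i else 0) := by
    intro ρ
    have step : ∀ α β γ : Fin d,
        E γ β * fderiv ℝ (fun Y => b Y ρ β) X (Pi.single α 1) * b X α γ
          = if α = i then
              (E γ β * (if (ρ = i ∧ β = L) ∨ (ρ = j ∧ β = Z) then (1:ℝ) else 0)
                * (if γ = L then X i else 0))
            else 0 := by
      intro α β γ
      rw [hd, hbeq]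
      by_cases hα : α = i
      · subst hα
        simp [hij]
      · simp [hα]
    calc (∑ α : Fin d, ∑ β : Fin d, ∑ γ : Fin d,
            E γ β * fderiv ℝ (fun Y => b Y ρ β) X (Pi.single α 1) * b X α γ)
        = ∑ α : Fin d, (if α = i then
            (∑ β : Fin d, ∑ γ : Fin d,
              E γ β * (if (ρ = i ∧ β = L) ∨ (ρ = j ∧ β = Z) then (1:ℝ) else 0)
                * (if γ = L then X i else 0)) else 0) := by
          refine Finset.sum_congr rfl fun α _ => ?_
          rw [show (∑ β : Fin d, ∑ γ : Fin d,
              E γ β * fderiv ℝ (fun Y => b Y ρ β) X (Pi.single α 1) * b X α γ)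
            = ∑ β : Fin d, ∑ γ : Fin d, (if α = i then
              (E γ β * (if (ρ = i ∧ β = L) ∨ (ρ = j ∧ β = Z) then (1:ℝ) else 0)
                * (if γ = L then X i else 0)) else 0) from
            Finset.sum_congr rfl fun β _ => Finset.sum_congr rfl fun γ _ => step α β γ]
          split <;> simp
      _ = ∑ β : Fin d, ∑ γ : Fin d,
            E γ β * (if (ρ = i ∧ β = L) ∨ (ρ = j ∧ β = Z) then (1:ℝ) else 0)
              * (if γ = L then X i else 0) := by
          simp
      _ = ∑ β : Fin d,
            E L β * (if (ρ = i ∧ β = L) ∨ (ρ = j ∧ β = Z) then (1:ℝ) else 0) * X i := by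
          refine Finset.sum_congr rfl fun β _ => ?_
          rw [Finset.sum_eq_single L]
          · simp
          · intro γ _ hγ; simp [hγ]
          · simp
      _ = (if ρ = i then E L L * X i else if ρ = j then E L Z * X i else 0) := by
          by_cases hρi : ρ = i
          · subst hρi
            have hne : ρ ≠ j := hij
            rw [if_pos rfl]
            rw [Finset.sum_eq_single L]
            · simp
            · intro β _ hβ; simp [hβ, hne]
            · simp
          · rw [if_neg hρi]
            by_cases hρj : ρ = j
            · subst hρj
              have hne : ρ ≠ i := fun h => hij h.symm
              rw [if_pos rfl]
              rw [Finset.sum_eq_single Z]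
              · simp [hne]
              · intro β _ hβ; simp [hβ, hne]
              · simp
            · rw [if_neg hρj]
              refine Finset.sum_eq_zero fun β _ => ?_
              simp [hρi, hρj]
  have hELL : E L L = 0 := by
    refine hblock L L (Or.inr ⟨?_, ?_⟩) <;> · simp [hL]; omega
  refine ⟨fun ρ => ?_, fun hE hX => ?_⟩
  · rw [key]
    by_cases hρi : ρ = i
    · subst hρi
      simp [hij, hELL]
    · by_cases hρj : ρ = j
      · subst hρj
        simp [hρi]
        ring
      · simp [hρi, hρj]
  · refine ⟨j, ?_⟩
    rw [key, if_neg (fun h => hij h.symm), if_pos rfl, ← mul_assoc]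
    exact mul_ne_zero (mul_ne_zero (by norm_num) hE) hX
end
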